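/- arXiv:1308.2427 — 2 statements merged into one kernel-verified Lean document; each statement's English description precedes it below -/
import Mathlib

section
/- Let A and B be densely defined operators in a complex Hilbert space H, with B closed, injective, having range all of H, and with inverse B⁻¹ a bounded everywhere-defined operator on H. Then (AB)* = B*A*. In particular this holds when B is unitary. -/
open LinearPMap

variable {H : Type*} [NormedAddCommGroup H] [InnerProductSpace ℂ H] [CompleteSpace H]

/-- The graph of the unbounded-operator product `A ∘ B`,
i.e. the linear relation `{(x, z) : ∃ y, (x, y) ∈ graph B ∧ (y, z) ∈ graph A}`. -/
noncomputable def LinearPMap.productGraph (A B : H →ₗ.[ℂ] H) : Submodule ℂ (H × H) where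
  carrier := {p : H × H | ∃ y : H, (p.1, y) ∈ B.graph ∧ (y, p.2) ∈ A.graph}
  add_mem' := by
    rintro p q ⟨y, hy1, hy2⟩ ⟨z, hz1, hz2⟩
    exact ⟨y + z, add_mem hy1 hz1, add_mem hy2 hz2⟩
  zero_mem' := ⟨0, zero_mem _, zero_mem _⟩
  smul_mem' := by
    rintro c p ⟨y, hy1, hy2⟩
    exact ⟨c • y, Submodule.smul_mem _ c hy1, Submodule.smul_mem _ c hy2⟩

/-- The product (composition) `A ∘ B` of two unbounded operators: its domain is
`{x ∈ D(B) : B x ∈ D(A)}` and it sends `x` to `A (B x)`. -/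
noncomputable def LinearPMap.product (A B : H →ₗ.[ℂ] H) : H →ₗ.[ℂ] H :=
  (A.productGraph B).toLinearPMap

/-- An unbounded operator is normal if it is densely defined, closed and `T*T = TT*`
(equality of unbounded operators, including equality of domains). -/
def LinearPMap.IsNormalOp (T : H →ₗ.[ℂ] H) : Prop :=
  Dense (T.domain : Set H) ∧ T.IsClosed ∧ (T†).product T = T.product (T†)

/-- `B` is relatively bounded with respect to `T` (`B` is `T`-bounded): `D(T) ⊆ D(B)` and
`‖B x‖ ≤ a ‖x‖ + b ‖T x‖` on `D(T)` for some constants `a, b ≥ 0`. -/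
def LinearPMap.IsRelativelyBounded (B T : H →ₗ.[ℂ] H) : Prop :=
  T.domain ≤ B.domain ∧ ∃ a b : ℝ, 0 ≤ a ∧ 0 ≤ b ∧
    ∀ (x : H) (hxT : x ∈ T.domain) (hxB : x ∈ B.domain),
      ‖B ⟨x, hxB⟩‖ ≤ a * ‖x‖ + b * ‖T ⟨x, hxT⟩‖

/-!
For a bounded left inverse `C` of a surjective `B`, the pairs `(C x, z)` with `(x, z) ∈ graph A`
lie in `graph (AB)`. Testing an element `(y, w)` of `graph (AB)*` against them shows
`(y, C* w) ∈ graph A*` and `(C* w, w) ∈ graph B*`, which is the inclusion `(AB)* ⊆ B*A*`; the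
reverse inclusion holds for any densely defined `A`, `B`, `AB`. The same pairs make `D(AB)`
dense: a vector `v ⊥ D(AB)` has `C* v ⊥ D(A)`, so `C* v = 0`, and then `v ⊥ C B D(B) = D(B)`.
-/

namespace LinearPMap

theorem mem_adjoint_graph_iff {𝕜 E F : Type*} [RCLike 𝕜] [NormedAddCommGroup E]
    [InnerProductSpace 𝕜 E] [NormedAddCommGroup F] [InnerProductSpace 𝕜 F] [CompleteSpace E]
    {T : E →ₗ.[𝕜] F} (hT : Dense (T.domain : Set E)) {y : F} {w : E} :
    (y, w) ∈ (T†).graph ↔ ∀ x z, (x, z) ∈ T.graph → inner 𝕜 w x = inner 𝕜 y z := by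
  constructor
  · intro h x z hxz
    obtain ⟨u, rfl, rfl⟩ := (mem_graph_iff _).1 h
    obtain ⟨v, rfl, rfl⟩ := (mem_graph_iff _).1 hxz
    exact adjoint_isFormalAdjoint hT u v
  · intro h
    have h' : ∀ x : T.domain, inner 𝕜 w (x : E) = inner 𝕜 y (T x) := fun x =>
      h x (T x) (T.mem_graph x)
    have hy : y ∈ (T†).domain := mem_adjoint_domain_of_exists y ⟨w, h'⟩
    exact (mem_graph_iff _).2 ⟨⟨y, hy⟩, rfl, adjoint_apply_eq hT ⟨y, hy⟩ h'⟩

theorem mem_graph_of_leftInverse_of_range_eq_top {R E F : Type*} [Ring R] [AddCommGroup E]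
    [Module R E] [AddCommGroup F] [Module R F] {B : E →ₗ.[R] F} {C : F → E}
    (hsurj : LinearMap.range B.toFun = ⊤) (hC : ∀ x : B.domain, C (B x) = x) (y : F) :
    (C y, y) ∈ B.graph := by
  obtain ⟨x, rfl⟩ := LinearMap.range_eq_top.1 hsurj y
  exact (hC x).symm ▸ B.mem_graph x

omit [CompleteSpace H] in
theorem graph_product (A B : H →ₗ.[ℂ] H) : (A.product B).graph = A.productGraph B := by
  apply Submodule.toLinearPMap_graph_eq
  rintro z ⟨m, hm1, hm2⟩ h0
  exact A.graph_fst_eq_zero_snd hm2 (B.graph_fst_eq_zero_snd hm1 h0)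

omit [CompleteSpace H] in
theorem mem_graph_product {A B : H →ₗ.[ℂ] H} {x z : H} :
    (x, z) ∈ (A.product B).graph ↔ ∃ y, (x, y) ∈ B.graph ∧ (y, z) ∈ A.graph := by
  rw [graph_product]
  rfl

omit [CompleteSpace H] in
theorem mem_graph_product_of_leftInverse {A B : H →ₗ.[ℂ] H} {C : H → H}
    (hsurj : LinearMap.range B.toFun = ⊤) (hC : ∀ x : B.domain, C (B x) = x) {x z : H}
    (hxz : (x, z) ∈ A.graph) : (C x, z) ∈ (A.product B).graph :=
  mem_graph_product.2 ⟨x, mem_graph_of_leftInverse_of_range_eq_top hsurj hC x, hxz⟩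

theorem dense_product_domain_of_leftInverse {A B : H →ₗ.[ℂ] H} {C : H →L[ℂ] H}
    (hsurj : LinearMap.range B.toFun = ⊤)
    (hC : ∀ x : B.domain, C (B x) = x) (hA : Dense (A.domain : Set H))
    (hB : Dense (B.domain : Set H)) : Dense ((A.product B).domain : Set H) := by
  rw [Submodule.dense_iff_topologicalClosure_eq_top, Submodule.topologicalClosure_eq_top_iff,
    Submodule.eq_bot_iff]
  intro v hv
  have hCv : C.adjoint v = 0 := by
    refine hA.eq_zero_of_inner_right ℂ fun x hx => ?_
    rw [ContinuousLinearMap.adjoint_inner_right]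
    exact hv _ (mem_domain_of_mem_graph
      (mem_graph_product_of_leftInverse hsurj hC (A.mem_graph ⟨x, hx⟩)))
  refine hB.eq_zero_of_inner_right ℂ fun x hx => ?_
  obtain ⟨x, rfl⟩ : ∃ x' : B.domain, (x' : H) = x := ⟨⟨x, hx⟩, rfl⟩
  rw [← hC x, ← ContinuousLinearMap.adjoint_inner_right, hCv, inner_zero_right]

theorem graph_adjoint_product_le_of_leftInverse {A B : H →ₗ.[ℂ] H} {C : H →L[ℂ] H}
    (hsurj : LinearMap.range B.toFun = ⊤)
    (hC : ∀ x : B.domain, C (B x) = x) (hA : Dense (A.domain : Set H))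
    (hB : Dense (B.domain : Set H)) :
    (A.product B)†.graph ≤ ((B†).product (A†)).graph := by
  rintro ⟨y, w⟩ h
  rw [mem_adjoint_graph_iff (dense_product_domain_of_leftInverse hsurj hC hA hB)] at h
  refine mem_graph_product.2 ⟨C.adjoint w, ?_, ?_⟩
  · rw [mem_adjoint_graph_iff hA]
    intro x z hxz
    rw [ContinuousLinearMap.adjoint_inner_left]
    exact h _ _ (mem_graph_product_of_leftInverse hsurj hC hxz)
  · rw [mem_adjoint_graph_iff hB]
    intro _ _ hxz
    obtain ⟨x, rfl, rfl⟩ := (mem_graph_iff _).1 hxz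
    rw [ContinuousLinearMap.adjoint_inner_left, hC x]

theorem graph_product_adjoint_le_adjoint_product {A B : H →ₗ.[ℂ] H}
    (hA : Dense (A.domain : Set H)) (hB : Dense (B.domain : Set H))
    (hAB : Dense ((A.product B).domain : Set H)) :
    ((B†).product (A†)).graph ≤ (A.product B)†.graph := by
  rintro ⟨y, w⟩ h
  obtain ⟨u, hyu, huw⟩ := mem_graph_product.1 h
  rw [mem_adjoint_graph_iff hA] at hyu
  rw [mem_adjoint_graph_iff hB] at huw
  rw [mem_adjoint_graph_iff hAB]
  intro x z hxz
  obtain ⟨m, hxm, hmz⟩ := mem_graph_product.1 hxz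
  rw [huw x m hxm, hyu m z hmz]

end LinearPMap

theorem statement7_general (A B : H →ₗ.[ℂ] H)
    (hA : Dense (A.domain : Set H)) (hB : Dense (B.domain : Set H))
    (hsurj : LinearMap.range B.toFun = ⊤)
    (C : H →L[ℂ] H) (hC : ∀ x : B.domain, C (B x) = x) :
    (A.product B)† = (B†).product (A†) :=
  eq_of_eq_graph <| le_antisymm (graph_adjoint_product_le_of_leftInverse hsurj hC hA hB)
    (graph_product_adjoint_le_adjoint_product hA hB
      (dense_product_domain_of_leftInverse hsurj hC hA hB))

/-- If `A`, `B` are densely defined, `B` is closed, injective, surjective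
with bounded everywhere-defined inverse, then `(AB)* = B*A*`. -/
theorem statement7 (A B : H →ₗ.[ℂ] H)
    (hA : Dense (A.domain : Set H)) (hB : Dense (B.domain : Set H))
    (hBcl : B.IsClosed) (hinj : LinearMap.ker B.toFun = ⊥)
    (hsurj : LinearMap.range B.toFun = ⊤)
    (C : H →L[ℂ] H) (hC : ∀ x : B.domain, C (B x) = x) :
    (A.product B)† = (B†).product (A†) :=
  statement7_general A B hA hB hsurj C hC
end

section
/- Let A, B and AB be densely defined closeable operators in a complex Hilbert space H. If closure(B) is relatively bounded with respect to the product closure(A)closure(B), then closure(A)closure(B) is a closed operator and closure(AB) ⊆ closure(A)closure(B). -/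
open LinearPMap

variable {H : Type*} [NormedAddCommGroup H] [InnerProductSpace ℂ H] [CompleteSpace H]

lemma LinearPMap.product_graph_eq (A B : H →ₗ.[ℂ] H) :
    (A.product B).graph = A.productGraph B := by
  apply Submodule.toLinearPMap_graph_eq
  rintro ⟨x, z⟩ ⟨y, hy1, hy2⟩ (hx0 : x = 0)
  subst hx0
  have hy0 : y = 0 := B.graph_fst_eq_zero_snd hy1 rfl
  subst hy0
  exact A.graph_fst_eq_zero_snd hy2 rfl

lemma LinearPMap.isClosed_closure_eq {g : H →ₗ.[ℂ] H} (hg : g.IsClosed) :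
    g.closure = g := by
  apply LinearPMap.eq_of_eq_graph
  rw [← hg.isClosable.graph_closure_eq_closure_graph]
  exact SetLike.ext' hg.closure_eq

/-- If `A`, `B` and `AB` are densely defined and closeable and `closure(B)`
is relatively bounded with respect to `closure(A)closure(B)`, then
`closure(A)closure(B)` is closed and `closure(AB) ⊆ closure(A)closure(B)`. -/
theorem statement17 (A B : H →ₗ.[ℂ] H)
    (hA : Dense (A.domain : Set H)) (hB : Dense (B.domain : Set H))
    (hABd : Dense ((A.product B).domain : Set H))
    (hAc : A.IsClosable) (hBc : B.IsClosable) (hABc : (A.product B).IsClosable)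
    (h : B.closure.IsRelativelyBounded (A.closure.product B.closure)) :
    (A.closure.product B.closure).IsClosed ∧
      (A.product B).closure ≤ A.closure.product B.closure := by
  set A' := A.closure with hA'
  set B' := B.closure with hB'
  set T := A'.product B' with hT
  obtain ⟨hdom, a, b, ha, hb, hbound⟩ := h
  have hBgr : IsClosed (B'.graph : Set (H × H)) := hBc.closure_isClosed
  have hAgr : IsClosed (A'.graph : Set (H × H)) := hAc.closure_isClosed
  have hTclosed : T.IsClosed := by
    show IsClosed (T.graph : Set (H × H))
    rw [LinearPMap.product_graph_eq]
    apply IsSeqClosed.isClosed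
    intro u p hu hup
    choose y hy1 hy2 using hu
    -- key bound on differences
    have key : ∀ n m : ℕ, ‖y n - y m‖ ≤
        a * ‖(u n).1 - (u m).1‖ + b * ‖(u n).2 - (u m).2‖ := by
      intro n m
      have hBnm : ((u n).1 - (u m).1, y n - y m) ∈ B'.graph :=
        sub_mem (hy1 n) (hy1 m)
      have hTnm : ((u n).1 - (u m).1, (u n).2 - (u m).2) ∈ T.graph := by
        rw [LinearPMap.product_graph_eq]
        exact ⟨y n - y m, hBnm, sub_mem (hy2 n) (hy2 m)⟩
      have hxT : (u n).1 - (u m).1 ∈ T.domain :=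
        LinearPMap.mem_domain_of_mem_graph hTnm
      have hxB : (u n).1 - (u m).1 ∈ B'.domain := hdom hxT
      have hBval : B' ⟨_, hxB⟩ = y n - y m :=
        B'.mem_graph_snd_inj (B'.mem_graph ⟨_, hxB⟩) hBnm rfl
      have hTval : T ⟨_, hxT⟩ = (u n).2 - (u m).2 :=
        T.mem_graph_snd_inj (T.mem_graph ⟨_, hxT⟩) hTnm rfl
      have := hbound _ hxT hxB
      rwa [hBval, hTval] at this
    -- y is Cauchy
    have hu1 : CauchySeq fun n => (u n).1 :=
      ((continuous_fst.tendsto p).comp hup).cauchySeq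
    have hu2 : CauchySeq fun n => (u n).2 :=
      ((continuous_snd.tendsto p).comp hup).cauchySeq
    have hyc : CauchySeq y := by
      rw [Metric.cauchySeq_iff]
      intro ε hε
      have hε' : 0 < ε / (a + b + 1) := by positivity
      obtain ⟨N1, hN1⟩ := Metric.cauchySeq_iff.mp hu1 _ hε'
      obtain ⟨N2, hN2⟩ := Metric.cauchySeq_iff.mp hu2 _ hε'
      refine ⟨max N1 N2, fun n hn m hm => ?_⟩
      have d1 := hN1 n (le_of_max_le_left hn) m (le_of_max_le_left hm)
      have d2 := hN2 n (le_of_max_le_right hn) m (le_of_max_le_right hm)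
      rw [dist_eq_norm] at d1 d2 ⊢
      calc ‖y n - y m‖ ≤ a * ‖(u n).1 - (u m).1‖ + b * ‖(u n).2 - (u m).2‖ :=
            key n m
        _ ≤ a * (ε / (a + b + 1)) + b * (ε / (a + b + 1)) := by
            have := d1.le
            have := d2.le
            nlinarith
        _ = (a + b) * (ε / (a + b + 1)) := by ring
        _ < ε := by
            rw [mul_div_assoc', div_lt_iff₀ (by positivity)]
            nlinarith
    obtain ⟨z, hz⟩ := cauchySeq_tendsto_of_complete hyc
    refine ⟨z, ?_, ?_⟩
    · exact hBgr.mem_of_tendsto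
        (Filter.Tendsto.prodMk_nhds ((continuous_fst.tendsto p).comp hup) hz)
        (Filter.Eventually.of_forall hy1)
    · exact hAgr.mem_of_tendsto
        (Filter.Tendsto.prodMk_nhds hz ((continuous_snd.tendsto p).comp hup))
        (Filter.Eventually.of_forall hy2)
  refine ⟨hTclosed, ?_⟩
  have hle : A.product B ≤ T := by
    apply LinearPMap.le_of_le_graph
    rw [LinearPMap.product_graph_eq, LinearPMap.product_graph_eq]
    rintro ⟨x, z⟩ ⟨y, hy1, hy2⟩
    exact ⟨y, B.le_graph_of_le (B.le_closure) hy1, A.le_graph_of_le (A.le_closure) hy2⟩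
  have := hTclosed.isClosable.closure_mono hle
  rwa [LinearPMap.isClosed_closure_eq hTclosed] at this
end
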